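/- arXiv:1110.4977 — 6 statements merged into one kernel-verified Lean document; each statement's English description precedes it below -/
import Mathlib

section
/- Let G be a simple graph with an alternating 4-cycle ⟨a,b:c,d⟩, and let H be the graph obtained from G by the 2-switch on ⟨a,b:c,d⟩. If every vertex u ∉ {a,b,c,d} is adjacent to both of a,c or to neither of a,c, then the transposition of a and c (fixing all other vertices) is a graph isomorphism from G to H; in particular G ≅ H. -/
/-!
The 2-switch toggles adjacency on exactly the four pairs `ab, cd, bc, ad`, and `swap a c`
permutes these pairs, sending the edges `ab, cd` to the non-edges `cb, ad` and back. On every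
other pair `swap a c` preserves adjacency, since `a` and `c` have the same neighbours outside
`{b, d}`.
-/

open SimpleGraph

/-- An alternating 4-cycle ⟨a,b:c,d⟩: four distinct vertices with ab, cd edges
and bc, ad non-edges. -/
def A4 {V : Type*} (G : SimpleGraph V) (a b c d : V) : Prop :=
  a ≠ b ∧ a ≠ c ∧ a ≠ d ∧ b ≠ c ∧ b ≠ d ∧ c ≠ d ∧
  G.Adj a b ∧ G.Adj c d ∧ ¬ G.Adj b c ∧ ¬ G.Adj a d

/-- The 2-switch on ⟨a,b:c,d⟩: delete edges ab, cd and add edges bc, ad. -/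
def twoSwitch {V : Type*} (G : SimpleGraph V) (a b c d : V) : SimpleGraph V :=
  SimpleGraph.fromEdgeSet ((G.edgeSet \ {s(a,b), s(c,d)}) ∪ {s(b,c), s(a,d)})

theorem Set.mem_diff_union_iff_xor {α : Type*} {E D A : Set α} {e : α} (hD : D ⊆ E)
    (hA : Disjoint A E) : e ∈ E \ D ∪ A ↔ Xor (e ∈ E) (e ∈ D ∪ A) := by
  have := @hD e
  have := hA.notMem_of_mem_left (a := e)
  simp only [Set.mem_union, Set.mem_sdiff]
  grind

section TwoSwitch

variable {V : Type*} {G : SimpleGraph V} {a b c d : V}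

def switchedPairs (a b c d : V) : Set (Sym2 V) := {s(a,b), s(c,d)} ∪ {s(b,c), s(a,d)}

theorem twoSwitch_adj_iff (h : A4 G a b c d) {x y : V} :
    (twoSwitch G a b c d).Adj x y ↔ Xor (G.Adj x y) (s(x,y) ∈ switchedPairs a b c d) := by
  obtain ⟨hab, hac, had, hbc, hbd, hcd, Gab, Gcd, nGbc, nGad⟩ := h
  have hD : ({s(a,b), s(c,d)} : Set (Sym2 V)) ⊆ G.edgeSet := by
    simp [Set.insert_subset_iff, Gab, Gcd]
  have hA : Disjoint ({s(b,c), s(a,d)} : Set (Sym2 V)) G.edgeSet := by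
    simp [Set.disjoint_insert_left, nGbc, nGad]
  rw [twoSwitch, fromEdgeSet_adj, Set.mem_diff_union_iff_xor hD hA, mem_edgeSet]
  rcases eq_or_ne x y with rfl | hxy
  · simp only [switchedPairs, Set.mem_union, Set.mem_insert_iff, Set.mem_singleton_iff,
      Sym2.eq_iff, G.irrefl]
    grind
  · simp only [switchedPairs, hxy, ne_eq, not_false_eq_true, and_true]

variable [DecidableEq V]

theorem adj_swap_right_iff_of_twin {u : V} (htwin : G.Adj u a ↔ G.Adj u c) (v : V) :
    G.Adj u (Equiv.swap a c v) ↔ G.Adj u v := by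
  rw [Equiv.swap_apply_def]
  split_ifs with hva hvc
  · exact hva ▸ htwin.symm
  · exact hvc ▸ htwin
  · rfl

theorem adj_swap_swap_iff_of_twin {x y : V}
    (hx : x ≠ a → x ≠ c → (y = a ∨ y = c) → (G.Adj x a ↔ G.Adj x c))
    (hy : y ≠ a → y ≠ c → (x = a ∨ x = c) → (G.Adj y a ↔ G.Adj y c)) :
    G.Adj (Equiv.swap a c x) (Equiv.swap a c y) ↔ G.Adj x y := by
  by_cases hxac : x = a ∨ x = c
  · by_cases hyac : y = a ∨ y = c
    · rcases hxac with rfl | rfl <;> rcases hyac with rfl | rfl <;> simp [G.adj_comm]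
    · push Not at hyac
      rw [Equiv.swap_apply_of_ne_of_ne hyac.1 hyac.2, G.adj_comm,
        adj_swap_right_iff_of_twin (hy hyac.1 hyac.2 hxac), G.adj_comm]
  · push Not at hxac
    rw [Equiv.swap_apply_of_ne_of_ne hxac.1 hxac.2]
    by_cases hyac : y = a ∨ y = c
    · exact adj_swap_right_iff_of_twin (hx hxac.1 hxac.2 hyac) y
    · push Not at hyac
      rw [Equiv.swap_apply_of_ne_of_ne hyac.1 hyac.2]

theorem swap_mem_switchedPairs (h : A4 G a b c d) {x y : V}
    (hxy : s(x,y) ∈ switchedPairs a b c d) :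
    s(Equiv.swap a c x, Equiv.swap a c y) ∈ switchedPairs a b c d ∧
      (G.Adj (Equiv.swap a c x) (Equiv.swap a c y) ↔ ¬ G.Adj x y) := by
  obtain ⟨hab, hac, had, hbc, hbd, hcd, Gab, Gcd, nGbc, nGad⟩ := h
  simp only [switchedPairs, Set.mem_union, Set.mem_insert_iff, Set.mem_singleton_iff, Sym2.eq_iff,
    or_assoc] at hxy
  have nGcb : ¬ G.Adj c b := fun h ↦ nGbc h.symm
  have nGda : ¬ G.Adj d a := fun h ↦ nGad h.symm
  rcases hxy with ⟨rfl, rfl⟩ | ⟨rfl, rfl⟩ | ⟨rfl, rfl⟩ | ⟨rfl, rfl⟩ | ⟨rfl, rfl⟩ | ⟨rfl, rfl⟩ |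
      ⟨rfl, rfl⟩ | ⟨rfl, rfl⟩ <;>
    simp [switchedPairs, Equiv.swap_apply_of_ne_of_ne, hab, hac, had, hbc, hbd, hcd, hab.symm,
      hac.symm, had.symm, hbc.symm, hbd.symm, hcd.symm, Gab, Gcd, Gab.symm, Gcd.symm, nGbc, nGad,
      nGcb, nGda]

theorem adj_swap_swap_iff_of_notMem_switchedPairs
    (hmod : ∀ u : V, u ∉ ({a, b, c, d} : Set V) → (G.Adj u a ↔ G.Adj u c)) {x y : V}
    (hxy : s(x,y) ∉ switchedPairs a b c d) :
    G.Adj (Equiv.swap a c x) (Equiv.swap a c y) ↔ G.Adj x y := by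
  simp only [switchedPairs, Set.mem_union, Set.mem_insert_iff, Set.mem_singleton_iff, Sym2.eq_iff,
    not_or, not_and] at hxy
  refine adj_swap_swap_iff_of_twin (fun hxa hxc hy ↦ hmod x ?_) (fun hya hyc hx ↦ hmod y ?_) <;>
    simp only [Set.mem_insert_iff, Set.mem_singleton_iff, not_or] <;> grind

theorem adj_iff_twoSwitch_adj_swap (h : A4 G a b c d)
    (hmod : ∀ u : V, u ∉ ({a, b, c, d} : Set V) → (G.Adj u a ↔ G.Adj u c)) (x y : V) :
    G.Adj x y ↔ (twoSwitch G a b c d).Adj (Equiv.swap a c x) (Equiv.swap a c y) := by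
  rw [twoSwitch_adj_iff h]
  by_cases hxy : s(x,y) ∈ switchedPairs a b c d
  · obtain ⟨hmem, hadj⟩ := swap_mem_switchedPairs h hxy
    simp [hmem, hadj]
  · have hmem : s(Equiv.swap a c x, Equiv.swap a c y) ∉ switchedPairs a b c d := fun hmem ↦
      hxy (by simpa using (swap_mem_switchedPairs h hmem).1)
    simp [hmem, adj_swap_swap_iff_of_notMem_switchedPairs hmod hxy, xor_def]

end TwoSwitch

theorem stmt_1 {V : Type*} [DecidableEq V] (G : SimpleGraph V) (a b c d : V)
    (h : A4 G a b c d)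
    (hmod : ∀ u : V, u ∉ ({a, b, c, d} : Set V) → (G.Adj u a ↔ G.Adj u c)) :
    (∀ x y : V, G.Adj x y ↔
        (twoSwitch G a b c d).Adj (Equiv.swap a c x) (Equiv.swap a c y)) ∧
      Nonempty (G ≃g twoSwitch G a b c d) := by
  have hswap := adj_iff_twoSwitch_adj_swap h hmod
  exact ⟨hswap, ⟨⟨Equiv.swap a c, (hswap _ _).symm⟩⟩⟩
end

section
/- Let G be a simple graph with an alternating 4-cycle ⟨a,b:c,d⟩, and let H be the graph obtained from G by the 2-switch on ⟨a,b:c,d⟩. If every vertex u ∉ {a,b,c,d} is adjacent to both of b,d or to neither of b,d, then the transposition of b and d (fixing all other vertices) is a graph isomorphism from G to H; in particular G ≅ H. -/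
open SimpleGraph

section TwoSwitch

variable {V : Type*} {G : SimpleGraph V} {a b c d u v : V}

theorem twoSwitch_comm : twoSwitch G c d a b = twoSwitch G a b c d := by
  rw [twoSwitch, twoSwitch, Set.pair_comm s(c, d), Set.pair_comm s(d, a),
    Sym2.eq_swap (a := d) (b := a), Sym2.eq_swap (a := c) (b := b)]

theorem twoSwitch_adj_iff_of_ne (hab : s(u, v) ≠ s(a, b)) (hcd : s(u, v) ≠ s(c, d))
    (hbc : s(u, v) ≠ s(b, c)) (had : s(u, v) ≠ s(a, d)) :
    (twoSwitch G a b c d).Adj u v ↔ G.Adj u v := by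
  simp only [twoSwitch, fromEdgeSet_adj, Set.mem_union, Set.mem_sdiff, Set.mem_insert_iff,
    Set.mem_singleton_iff, mem_edgeSet, hab, hcd, hbc, had]
  simp only [or_false, not_false_eq_true, and_true, and_iff_left_iff_imp]
  exact Adj.ne

theorem twoSwitch_adj_iff_of_ne_of_ne (hub : u ≠ b) (hud : u ≠ d) (hvb : v ≠ b) (hvd : v ≠ d) :
    (twoSwitch G a b c d).Adj u v ↔ G.Adj u v :=
  twoSwitch_adj_iff_of_ne (by simp [hub, hvb]) (by simp [hud, hvd]) (by simp [hub, hvb])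
    (by simp [hud, hvd])

namespace A4

theorem symm (h : A4 G a b c d) : A4 G c d a b := by
  obtain ⟨hab, hac, had, hbc, hbd, hcd, hGab, hGcd, hGbc, hGad⟩ := h
  exact ⟨hcd, hac.symm, hbc.symm, had.symm, hbd.symm, hab, hGcd, hGab,
    fun h ↦ hGad h.symm, fun h ↦ hGbc h.symm⟩

variable (h : A4 G a b c d)
include h

theorem twoSwitch_adj_ad : (twoSwitch G a b c d).Adj a d := by
  obtain ⟨-, -, had, -⟩ := h
  simp [twoSwitch, had]

theorem not_twoSwitch_adj_cd : ¬ (twoSwitch G a b c d).Adj c d := by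
  obtain ⟨-, hac, -, hbc, hbd, -⟩ := h
  simp only [twoSwitch, fromEdgeSet_adj, Set.mem_union, Set.mem_sdiff, Set.mem_insert_iff,
    Set.mem_singleton_iff, Sym2.eq_iff]
  grind

theorem twoSwitch_adj_bd_iff : (twoSwitch G a b c d).Adj b d ↔ G.Adj b d := by
  obtain ⟨hab, hac, had, hbc, hbd, hcd, -⟩ := h
  exact twoSwitch_adj_iff_of_ne (by grind [Sym2.eq_iff]) (by grind [Sym2.eq_iff])
    (by grind [Sym2.eq_iff]) (by grind [Sym2.eq_iff])

/-- Away from the 4-cycle this is the hypothesis on `u`; the neighbour `a` of `b` becomes a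
neighbour of `d` through the added edge `ad`, and the non-neighbour `c` of `b` stays a
non-neighbour of `d` because `cd` is deleted. -/
theorem adj_b_iff_twoSwitch_adj_d (hub : u ≠ b) (hud : u ≠ d)
    (hmod : u ≠ a → u ≠ c → (G.Adj u b ↔ G.Adj u d)) :
    G.Adj u b ↔ (twoSwitch G a b c d).Adj u d := by
  have ⟨_, _, _, _, _, _, hGab, _, hGbc, _⟩ := h
  obtain rfl | hua := eq_or_ne u a
  · exact iff_of_true hGab h.twoSwitch_adj_ad
  obtain rfl | huc := eq_or_ne u c
  · exact iff_of_false (fun h ↦ hGbc h.symm) h.not_twoSwitch_adj_cd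
  rw [hmod hua huc, twoSwitch_adj_iff_of_ne] <;> simp [hua, hub, huc, hud]

variable [DecidableEq V] (hmod : ∀ u : V, u ∉ ({a, b, c, d} : Set V) → (G.Adj u b ↔ G.Adj u d))
include hmod

theorem adj_iff_twoSwitch_adj_swap_of_ne (hub : u ≠ b) (hud : u ≠ d) (v : V) :
    G.Adj u v ↔ (twoSwitch G a b c d).Adj u (Equiv.swap b d v) := by
  have hmod_u : u ≠ a → u ≠ c → (G.Adj u b ↔ G.Adj u d) := fun hua huc ↦ hmod u (by simp [*])
  obtain rfl | hvb := eq_or_ne v b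
  · rw [Equiv.swap_apply_left]
    exact h.adj_b_iff_twoSwitch_adj_d hub hud hmod_u
  obtain rfl | hvd := eq_or_ne v d
  · rw [Equiv.swap_apply_right, ← twoSwitch_comm]
    exact h.symm.adj_b_iff_twoSwitch_adj_d hud hub fun huc hua ↦ (hmod_u hua huc).symm
  rw [Equiv.swap_apply_of_ne_of_ne hvb hvd, twoSwitch_adj_iff_of_ne_of_ne hub hud hvb hvd]

theorem adj_iff_twoSwitch_adj_swap (x y : V) :
    G.Adj x y ↔ (twoSwitch G a b c d).Adj (Equiv.swap b d x) (Equiv.swap b d y) := by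
  by_cases hx : x ≠ b ∧ x ≠ d
  · rw [Equiv.swap_apply_of_ne_of_ne hx.1 hx.2]
    exact h.adj_iff_twoSwitch_adj_swap_of_ne hmod hx.1 hx.2 y
  by_cases hy : y ≠ b ∧ y ≠ d
  · rw [Equiv.swap_apply_of_ne_of_ne hy.1 hy.2, adj_comm, adj_comm _ _ y]
    exact h.adj_iff_twoSwitch_adj_swap_of_ne hmod hy.1 hy.2 x
  have hbd := h.twoSwitch_adj_bd_iff
  obtain rfl | rfl : b = x ∨ d = x := by tauto
  all_goals obtain rfl | rfl : b = y ∨ d = y := by tauto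
  all_goals simp [adj_comm, hbd]

def swapIso : G ≃g twoSwitch G a b c d :=
  ⟨Equiv.swap b d, (h.adj_iff_twoSwitch_adj_swap hmod _ _).symm⟩

end A4

end TwoSwitch

theorem stmt_2 {V : Type*} [DecidableEq V] (G : SimpleGraph V) (a b c d : V)
    (h : A4 G a b c d)
    (hmod : ∀ u : V, u ∉ ({a, b, c, d} : Set V) → (G.Adj u b ↔ G.Adj u d)) :
    (∀ x y : V, G.Adj x y ↔
        (twoSwitch G a b c d).Adj (Equiv.swap b d x) (Equiv.swap b d y)) ∧
      Nonempty (G ≃g twoSwitch G a b c d) :=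
  ⟨h.adj_iff_twoSwitch_adj_swap hmod, ⟨h.swapIso hmod⟩⟩
end

section
/- The 5-vertex simple graphs that contain an alternating 4-cycle ⟨a,b:c,d⟩ together with a fifth vertex u such that ua, ud are edges and ub, uc are non-edges are, up to isomorphism, exactly: the path P5, the 4-pan (a 4-cycle with a pendant vertex attached), and the complete bipartite graph K_{2,3}. -/
/-
Besides the eight pairs among `a, b, c, d, u` that the hypothesis fixes, only `ac` and `bd` are
free, and the five vertices exhaust `V`. Neither edge gives the path `b a u d c`, exactly one gives
the 4-pan (the two cases are exchanged by `a ↔ d`, `b ↔ c`), and both give `K_{2,3}` with parts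
`{a, d}` and `{b, c, u}`. Conversely each of the three graphs contains such a configuration.
-/

open SimpleGraph

/-- The 4-pan: a 4-cycle 0-1-2-3 with a pendant vertex 4 attached to 0. -/
def fourPan : SimpleGraph (Fin 5) :=
  SimpleGraph.fromEdgeSet {s(0,1), s(1,2), s(2,3), s(3,0), s(0,4)}

namespace SimpleGraph

variable {V W : Type*} {G : SimpleGraph V} {H : SimpleGraph W}

theorem nonempty_iso_of_injective [Fintype V] [Fintype W] (f : W → V)
    (hf : Function.Injective f) (hcard : Fintype.card W = Fintype.card V)
    (hadj : ∀ x y, G.Adj (f x) (f y) ↔ H.Adj x y) : Nonempty (G ≃g H) :=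
  ⟨Iso.symm ⟨.ofBijective f ((Fintype.bijective_iff_injective_and_card f).2 ⟨hf, hcard⟩),
    hadj _ _⟩⟩

def IsA4WithCommonNeighbor (G : SimpleGraph V) (a b c d u : V) : Prop :=
  A4 G a b c d ∧ u ∉ ({a, b, c, d} : Set V) ∧
    G.Adj u a ∧ G.Adj u d ∧ ¬ G.Adj u b ∧ ¬ G.Adj u c

namespace IsA4WithCommonNeighbor

variable {a b c d u : V}

theorem symm (h : G.IsA4WithCommonNeighbor a b c d u) :
    G.IsA4WithCommonNeighbor d c b a u := by
  obtain ⟨⟨hab, hac, had, hbc, hbd, hcd, eab, ecd, nbc, nad⟩, hu, eua, eud, nub, nuc⟩ := h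
  refine ⟨⟨hcd.symm, hbd.symm, had.symm, hbc.symm, hac.symm, hab.symm, ecd.symm, eab.symm,
    fun h ↦ nbc h.symm, fun h ↦ nad h.symm⟩, ?_, eud, eua, nuc, nub⟩
  simp only [Set.mem_insert_iff, Set.mem_singleton_iff] at hu ⊢
  tauto

theorem map (e : G ≃g H) (h : G.IsA4WithCommonNeighbor a b c d u) :
    H.IsA4WithCommonNeighbor (e a) (e b) (e c) (e d) (e u) := by
  simpa only [IsA4WithCommonNeighbor, A4, Set.mem_insert_iff, Set.mem_singleton_iff, ne_eq,
    e.map_adj_iff, e.injective.eq_iff] using h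

section Fintype

variable [Fintype V]

theorem nonempty_iso_pathGraph (hV : Fintype.card V = 5)
    (h : G.IsA4WithCommonNeighbor a b c d u)
    (hac : ¬G.Adj a c) (hbd : ¬G.Adj b d) : Nonempty (G ≃g pathGraph 5) := by
  simp only [IsA4WithCommonNeighbor, A4, Set.mem_insert_iff, Set.mem_singleton_iff, not_or] at h
  refine nonempty_iso_of_injective ![b, a, u, d, c] ?_ (by simp [hV]) ?_ <;> intro i j <;>
    fin_cases i <;> fin_cases j <;> simp_all [adj_comm, eq_comm, pathGraph_adj]

theorem nonempty_iso_fourPan (hV : Fintype.card V = 5)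
    (h : G.IsA4WithCommonNeighbor a b c d u)
    (hac : G.Adj a c) (hbd : ¬G.Adj b d) : Nonempty (G ≃g fourPan) := by
  simp only [IsA4WithCommonNeighbor, A4, Set.mem_insert_iff, Set.mem_singleton_iff, not_or] at h
  refine nonempty_iso_of_injective ![a, c, d, u, b] ?_ (by simp [hV]) ?_ <;> intro i j <;>
    fin_cases i <;> fin_cases j <;> simp_all [adj_comm, eq_comm, fourPan]

theorem nonempty_iso_completeBipartiteGraph (hV : Fintype.card V = 5)
    (h : G.IsA4WithCommonNeighbor a b c d u) (hac : G.Adj a c) (hbd : G.Adj b d) :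
    Nonempty (G ≃g completeBipartiteGraph (Fin 2) (Fin 3)) := by
  simp only [IsA4WithCommonNeighbor, A4, Set.mem_insert_iff, Set.mem_singleton_iff, not_or] at h
  refine nonempty_iso_of_injective (Sum.elim ![a, d] ![b, c, u]) ?_ (by simp [hV]) ?_ <;>
    rintro (i | i) (j | j) <;> fin_cases i <;> fin_cases j <;> simp_all [adj_comm, eq_comm]

end Fintype

end IsA4WithCommonNeighbor

theorem isA4WithCommonNeighbor_pathGraph : (pathGraph 5).IsA4WithCommonNeighbor 1 0 4 3 2 := by
  simp [IsA4WithCommonNeighbor, A4, pathGraph_adj]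

theorem isA4WithCommonNeighbor_fourPan : fourPan.IsA4WithCommonNeighbor 0 4 1 2 3 := by
  simp [IsA4WithCommonNeighbor, A4, fourPan]

theorem isA4WithCommonNeighbor_completeBipartiteGraph :
    (completeBipartiteGraph (Fin 2) (Fin 3)).IsA4WithCommonNeighbor
      (.inl 0) (.inr 0) (.inr 1) (.inl 1) (.inr 2) := by
  simp [IsA4WithCommonNeighbor, A4]

end SimpleGraph

theorem stmt_11 {V : Type*} [Fintype V] (hV : Fintype.card V = 5)
    (G : SimpleGraph V) :
    (∃ a b c d u : V, A4 G a b c d ∧ u ∉ ({a, b, c, d} : Set V) ∧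
        G.Adj u a ∧ G.Adj u d ∧ ¬ G.Adj u b ∧ ¬ G.Adj u c) ↔
      (Nonempty (G ≃g SimpleGraph.pathGraph 5) ∨
       Nonempty (G ≃g fourPan) ∨
       Nonempty (G ≃g completeBipartiteGraph (Fin 2) (Fin 3))) := by
  constructor
  · rintro ⟨a, b, c, d, u, h : G.IsA4WithCommonNeighbor a b c d u⟩
    by_cases hac : G.Adj a c <;> by_cases hbd : G.Adj b d
    · exact .inr <| .inr <| h.nonempty_iso_completeBipartiteGraph hV hac hbd
    · exact .inr <| .inl <| h.nonempty_iso_fourPan hV hac hbd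
    · exact .inr <| .inl <| h.symm.nonempty_iso_fourPan hV hbd.symm (mt G.adj_symm hac)
    · exact .inl <| h.nonempty_iso_pathGraph hV hac hbd
  · rintro (⟨⟨e⟩⟩ | ⟨⟨e⟩⟩ | ⟨⟨e⟩⟩)
    · exact ⟨_, _, _, _, _, isA4WithCommonNeighbor_pathGraph.map e.symm⟩
    · exact ⟨_, _, _, _, _, isA4WithCommonNeighbor_fourPan.map e.symm⟩
    · exact ⟨_, _, _, _, _, isA4WithCommonNeighbor_completeBipartiteGraph.map e.symm⟩
end

section
/- Two finite simple graphs G and H on the same finite vertex set have the same degree function (deg_G v = deg_H v for all v) if and only if there is a finite sequence of 2-switches transforming G into H. -/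
/-!
A 2-switch replaces the edge set by its symmetric difference with the 4-cycle `a b c d`; hence it
preserves all degrees, and it is undone by the 2-switch on `⟨b,c:d,a⟩`.

Conversely, if `G ≠ H` have the same degrees, every vertex meets as many edges of `G \ H` as of
`H \ G`, so there is a closed walk alternating between the two. On such a walk of minimal length,
three consecutive edges `ab ∈ G \ H`, `bc ∈ H \ G`, `cd ∈ G \ H` with `a ≠ d` close up to a
4-cycle that is a 2-switch of `G` or of `H` and has three of its edges in `E(G) ∆ E(H)`.
Performing it makes `|E(G) ∆ E(H)|` smaller, and induction on this number finishes the proof.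
-/

open SimpleGraph

namespace TwoSwitch

open Relation
open scoped symmDiff

variable {V : Type*}

section Switch

variable {G : SimpleGraph V} {a b c d : V}

theorem edgeSet_twoSwitch (h : A4 G a b c d) :
    (twoSwitch G a b c d).edgeSet = G.edgeSet ∆ {s(a,b), s(b,c), s(c,d), s(d,a)} := by
  obtain ⟨-, -, had, hbc, -, -, eab, ecd, nbc, nad⟩ := h
  rw [twoSwitch, edgeSet_fromEdgeSet]
  ext e
  induction e with | h x y => ?_
  simp only [Set.mem_sdiff, Set.mem_union, Set.mem_insert_iff, Set.mem_singleton_iff,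
    Set.mem_symmDiff, mem_edgeSet, Sym2.mem_diagSet, Sym2.mk_isDiag_iff, Sym2.eq_iff]
  grind [G.adj_comm, G.ne_of_adj]

theorem adj_twoSwitch (h : A4 G a b c d) {x y : V} :
    (twoSwitch G a b c d).Adj x y ↔
      s(x,y) ∈ G.edgeSet ∆ {s(a,b), s(b,c), s(c,d), s(d,a)} := by
  rw [← mem_edgeSet, edgeSet_twoSwitch h]

theorem ncard_neighborSet_twoSwitch (h : A4 G a b c d) (v : V) :
    ((twoSwitch G a b c d).neighborSet v).ncard = (G.neighborSet v).ncard := by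
  have hadj (w : V) := adj_twoSwitch h (x := v) (y := w)
  obtain ⟨hab, hac, had, hbc, hbd, hcd, eab, ecd, nbc, nad⟩ := h
  have exchange (x y : V) (hx : G.Adj v x) (hy : ¬ G.Adj v y)
      (hN : ∀ w, (twoSwitch G a b c d).Adj v w ↔ G.Adj v w ∧ w ≠ x ∨ w = y) :
      ((twoSwitch G a b c d).neighborSet v).ncard = (G.neighborSet v).ncard := by
    have : (twoSwitch G a b c d).neighborSet v = insert y (G.neighborSet v \ {x}) := by
      ext w; simp only [mem_neighborSet, hN, Set.mem_insert_iff, Set.mem_sdiff,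
        Set.mem_singleton_iff]; tauto
    rw [this, Set.ncard_exchange (s := G.neighborSet v) hy hx]
  simp only [Set.mem_symmDiff, Set.mem_insert_iff, Set.mem_singleton_iff, mem_edgeSet,
    Sym2.eq_iff] at hadj
  by_cases hva : v = a
  · subst hva; exact exchange b d eab nad fun w => by grind [G.adj_comm]
  by_cases hvb : v = b
  · subst hvb; exact exchange a c eab.symm nbc fun w => by grind [G.adj_comm]
  by_cases hvc : v = c
  · subst hvc
    exact exchange d b ecd (fun h => nbc h.symm) fun w => by grind [G.adj_comm]
  by_cases hvd : v = d
  · subst hvd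
    exact exchange c a ecd.symm (fun h => nad h.symm) fun w => by grind [G.adj_comm]
  congr 1
  ext w
  simp only [mem_neighborSet, hadj]
  tauto

def TwoSwitchRel (X Y : SimpleGraph V) : Prop :=
  ∃ a b c d : V, A4 X a b c d ∧ Y = twoSwitch X a b c d

theorem TwoSwitchRel.symm {X Y : SimpleGraph V} (h : TwoSwitchRel X Y) : TwoSwitchRel Y X := by
  obtain ⟨a, b, c, d, h, rfl⟩ := h
  have hadj (x y : V) := adj_twoSwitch h (x := x) (y := y)
  obtain ⟨hab, hac, had, hbc, hbd, hcd, eab, ecd, nbc, nad⟩ := id h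
  simp only [Set.mem_symmDiff, Set.mem_insert_iff, Set.mem_singleton_iff, mem_edgeSet,
    Sym2.eq_iff] at hadj
  have h' : A4 (twoSwitch X a b c d) b c d a := by
    refine ⟨hbc, hbd, hab.symm, hcd, hac.symm, had.symm, ?_, ?_, ?_, ?_⟩ <;> grind [X.adj_comm]
  have hQ : ({s(b,c), s(c,d), s(d,a), s(a,b)} : Set (Sym2 V)) =
      {s(a,b), s(b,c), s(c,d), s(d,a)} := by
    ext; simp only [Set.mem_insert_iff, Set.mem_singleton_iff]; tauto
  refine ⟨b, c, d, a, h', ?_⟩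
  rw [← edgeSet_inj, edgeSet_twoSwitch h', edgeSet_twoSwitch h, hQ,
    symmDiff_symmDiff_cancel_right]

instance : Std.Symm (TwoSwitchRel (V := V)) := ⟨fun _ _ => TwoSwitchRel.symm⟩

theorem ncard_neighborSet_eq_of_reflTransGen {G H : SimpleGraph V}
    (h : ReflTransGen TwoSwitchRel G H) (v : V) :
    (H.neighborSet v).ncard = (G.neighborSet v).ncard := by
  induction h with
  | refl => rfl
  | tail _ hstep ih =>
    obtain ⟨a, b, c, d, hA, rfl⟩ := hstep
    exact (ncard_neighborSet_twoSwitch hA v).trans ih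

end Switch

theorem exists_seq_of_exists_succ {α : Type*} (R : ℕ → α → α → Prop) {a b : α}
    (h₀ : R 0 a b) (hR : ∀ i u v, R i u v → ∃ w, R (i + 1) v w) :
    ∃ s : ℕ → α, ∀ i, R i (s i) (s (i + 1)) := by
  have hext (i : ℕ) (v : α) : ∃ w, (∃ u, R i u v) → R (i + 1) v w := by
    by_cases h : ∃ u, R i u v
    · obtain ⟨u, hu⟩ := h
      obtain ⟨w, hw⟩ := hR i u v hu
      exact ⟨w, fun _ => hw⟩
    · exact ⟨v, fun h' => (h h').elim⟩
  choose f hf using hext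
  let p : ℕ → α × α := fun n => Nat.rec (a, b) (fun i q => (q.2, f i q.2)) n
  have hp (n : ℕ) : R n (p n).1 (p n).2 := by
    induction n with
    | zero => exact h₀
    | succ n ih => exact hf n (p n).2 ⟨_, ih⟩
  exact ⟨fun n => (p n).1, hp⟩

section Circuit

variable {G H : SimpleGraph V}

theorem exists_sdiff_adj_of_sdiff_adj [Finite V]
    (hdeg : ∀ v, (G.neighborSet v).ncard = (H.neighborSet v).ncard) {u v : V}
    (h : (G \ H).Adj u v) : ∃ w, (H \ G).Adj u w := by
  have hcard : ((G \ H).neighborSet u).ncard = ((H \ G).neighborSet u).ncard := by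
    rw [neighborSet_sdiff, neighborSet_sdiff]
    exact (Set.ncard_eq_ncard_iff_ncard_sdiff_eq_ncard_sdiff (Set.toFinite _) (Set.toFinite _)).1
      (hdeg u)
  have hpos : 0 < ((G \ H).neighborSet u).ncard := (Set.ncard_pos (Set.toFinite _)).2 ⟨v, h⟩
  exact Set.nonempty_of_ncard_ne_zero (hcard ▸ hpos.ne')

def altGraph (G H : SimpleGraph V) (i : ℕ) : SimpleGraph V :=
  if Even i then G \ H else H \ G

theorem altGraph_succ (i : ℕ) : altGraph G H (i + 1) = altGraph H G i := by
  by_cases hi : Even i <;> simp [altGraph, hi, Nat.even_add_one]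

theorem altGraph_add_two_mul (i j : ℕ) : altGraph G H (i + 2 * j) = altGraph G H i := by
  simp [altGraph, Nat.even_add]

theorem exists_altGraph_adj_succ [Finite V]
    (hdeg : ∀ v, (G.neighborSet v).ncard = (H.neighborSet v).ncard) {i : ℕ} {u v : V}
    (h : (altGraph G H i).Adj u v) : ∃ w, (altGraph G H (i + 1)).Adj v w := by
  rw [altGraph_succ]
  by_cases hi : Even i <;> simp only [altGraph, hi, if_true, if_false] at h ⊢
  · exact exists_sdiff_adj_of_sdiff_adj hdeg h.symm
  · exact exists_sdiff_adj_of_sdiff_adj (fun v => (hdeg v).symm) h.symm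

def IsAltCircuit (G H : SimpleGraph V) (m : ℕ) (c : ℕ → V) : Prop :=
  c (2 * m) = c 0 ∧ ∀ i < 2 * m, (altGraph G H i).Adj (c i) (c (i + 1))

theorem exists_isAltCircuit [Finite V]
    (hdeg : ∀ v, (G.neighborSet v).ncard = (H.neighborSet v).ncard) {a b : V}
    (h : (G \ H).Adj a b) : ∃ m, 0 < m ∧ ∃ c, IsAltCircuit G H m c := by
  obtain ⟨w, hw⟩ := exists_seq_of_exists_succ (fun i u v => (altGraph G H i).Adj u v)
    (by simpa [altGraph] using h) fun i u v => exists_altGraph_adj_succ hdeg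
  obtain ⟨i, j, hij, hwij⟩ := Finite.exists_ne_map_eq_of_infinite fun n => w (2 * n)
  wlog hlt : i < j generalizing i j
  · exact this j i hij.symm hwij.symm (by omega)
  refine ⟨j - i, by omega, fun k => w (k + 2 * i), ?_, fun k _ => ?_⟩
  · simpa [show 2 * (j - i) + 2 * i = 2 * j by omega] using hwij.symm
  · simpa [altGraph_add_two_mul, Nat.add_right_comm k 1] using hw (k + 2 * i)

namespace IsAltCircuit

variable {m : ℕ} {c : ℕ → V}

theorem one_lt (hc : IsAltCircuit G H m c) (hm : 0 < m) : 1 < m := by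
  by_contra h1
  obtain rfl : m = 1 := by omega
  have h₀ : (G \ H).Adj (c 0) (c 1) := by simpa [altGraph] using hc.2 0 (by omega)
  have h₁ : (H \ G).Adj (c 1) (c 2) := by simpa [altGraph] using hc.2 1 (by omega)
  rw [hc.1] at h₁
  exact h₁.2 h₀.1.symm

theorem shortcut (hc : IsAltCircuit G H m c) (hm : 1 < m) (h : (G \ H).Adj (c 0) (c 3)) :
    IsAltCircuit G H (m - 1) fun i => if i = 0 then c 0 else c (i + 2) := by
  refine ⟨?_, fun i hi => ?_⟩
  · simpa [show 2 * (m - 1) ≠ 0 by omega, show 2 * (m - 1) + 2 = 2 * m by omega] using hc.1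
  · rcases Nat.eq_zero_or_pos i with rfl | hi0
    · simpa [altGraph] using h
    · have h := hc.2 (i + 2 * 1) (by omega)
      rw [altGraph_add_two_mul] at h
      simpa [hi0.ne', Nat.add_right_comm i 1] using h

theorem rotate (hc : IsAltCircuit G H m c) (hm : 0 < m) :
    IsAltCircuit H G m fun i => if i < 2 * m then c (i + 1) else c 1 := by
  refine ⟨by simp [hm], fun i hi => ?_⟩
  rcases Nat.lt_or_ge (i + 1) (2 * m) with hi1 | hi1
  · simpa [hi, hi1, altGraph_succ] using hc.2 (i + 1) hi1
  · obtain rfl : i = 2 * m - 1 := by omega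
    have h₀ := hc.2 0 (by omega)
    have hG : altGraph H G (2 * m - 1) = altGraph G H 0 := by
      rw [← altGraph_succ, show 2 * m - 1 + 1 = 0 + 2 * m by omega, altGraph_add_two_mul]
    simpa [hi, hG, show 2 * m - 1 + 1 = 2 * m by omega, hc.1] using h₀

end IsAltCircuit

end Circuit

theorem ncard_symmDiff_insert_lt {α : Type*} {D : Set α} (hD : D.Finite) {p q r s : α}
    (hp : p ∈ D) (hq : q ∈ D) (hr : r ∈ D) (hpq : p ≠ q) (hpr : p ≠ r) (hqr : q ≠ r) :
    (D ∆ insert s {p, q, r}).ncard < D.ncard := by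
  have hsub : {p, q, r} ⊆ D := by simp [Set.insert_subset_iff, hp, hq, hr]
  have h3 : ({p, q, r} : Set α).ncard = 3 := Set.ncard_eq_three.2 ⟨p, q, r, hpq, hpr, hqr, rfl⟩
  have hle : 3 ≤ D.ncard := h3 ▸ Set.ncard_le_ncard hsub hD
  have hsd : D ∆ insert s {p, q, r} ⊆ insert s (D \ {p, q, r}) := by
    intro x hx
    simp only [Set.mem_symmDiff, Set.mem_insert_iff] at hx
    rcases hx with ⟨hxD, hx⟩ | ⟨hx | hx, hxD⟩
    · exact Or.inr ⟨hxD, fun h => hx (Or.inr h)⟩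
    · exact Or.inl hx
    · exact absurd (hsub hx) hxD
  calc (D ∆ insert s {p, q, r}).ncard
      ≤ (insert s (D \ {p, q, r})).ncard := Set.ncard_le_ncard hsd ((hD.sdiff).insert s)
    _ ≤ (D \ {p, q, r}).ncard + 1 := Set.ncard_insert_le _ _
    _ = D.ncard - 3 + 1 := by rw [Set.ncard_sdiff hsub, h3]
    _ < D.ncard := by omega

section Reduction

variable {X Y : SimpleGraph V}

def SwitchReducible (X Y : SimpleGraph V) : Prop :=
  ∃ X' Y', ReflTransGen TwoSwitchRel X X' ∧ ReflTransGen TwoSwitchRel Y Y' ∧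
    (X'.edgeSet ∆ Y'.edgeSet).ncard < (X.edgeSet ∆ Y.edgeSet).ncard

theorem SwitchReducible.symm (h : SwitchReducible X Y) : SwitchReducible Y X := by
  obtain ⟨X', Y', hX, hY, hlt⟩ := h
  exact ⟨Y', X', hY, hX, by rwa [symmDiff_comm, symmDiff_comm Y.edgeSet]⟩

/-- The 4-cycle `a b c d` is a 2-switch of `X` if `ad ∉ X` and of `Y` if `ad ∈ X ∩ Y`, and three
of its edges lie in the symmetric difference. -/
theorem switchReducible_of_path [Finite V] {a b c d : V} (hab : (X \ Y).Adj a b)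
    (hbc : (Y \ X).Adj b c) (hcd : (X \ Y).Adj c d) (had : a ≠ d) (hda : ¬ (X \ Y).Adj a d) :
    SwitchReducible X Y := by
  rw [sdiff_adj] at hab hbc hcd hda
  have hac : a ≠ c := by rintro rfl; exact hbc.2 hab.1.symm
  have hbd : b ≠ d := by rintro rfl; exact hbc.2 hcd.1.symm
  have hmem {x y : V} (h : X.Adj x y ∧ ¬ Y.Adj x y ∨ Y.Adj x y ∧ ¬ X.Adj x y) :
      s(x, y) ∈ X.edgeSet ∆ Y.edgeSet := by
    simpa only [Set.mem_symmDiff, mem_edgeSet] using h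
  have hlt : (X.edgeSet ∆ Y.edgeSet ∆ insert s(d, a) {s(a, b), s(b, c), s(c, d)}).ncard <
      (X.edgeSet ∆ Y.edgeSet).ncard :=
    ncard_symmDiff_insert_lt (Set.toFinite _) (hmem (.inl hab)) (hmem (.inr hbc))
      (hmem (.inl hcd)) (by simp [hac, hab.1.ne]) (by simp [had, hac])
      (by simp [hbc.1.ne, hbd, hcd.1.ne])
  by_cases hXad : X.Adj a d
  · have hA : A4 Y d a b c := ⟨had.symm, hbd.symm, hcd.1.ne.symm, hab.1.ne, hac, hbc.1.ne,
      (not_not.1 fun h => hda ⟨hXad, h⟩).symm, hbc.1, hab.2, fun h => hcd.2 h.symm⟩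
    refine ⟨X, twoSwitch Y d a b c, .refl, .single ⟨d, a, b, c, hA, rfl⟩, ?_⟩
    rwa [edgeSet_twoSwitch hA, ← symmDiff_assoc]
  · have hA : A4 X a b c d := ⟨hab.1.ne, hac, had, hbc.1.ne, hbd, hcd.1.ne,
      hab.1, hcd.1, hbc.2, hXad⟩
    refine ⟨twoSwitch X a b c d, Y, .single ⟨a, b, c, d, hA, rfl⟩, .refl, ?_⟩
    have hQ : ({s(a, b), s(b, c), s(c, d), s(d, a)} : Set (Sym2 V)) =
        insert s(d, a) {s(a, b), s(b, c), s(c, d)} := by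
      ext; simp only [Set.mem_insert_iff, Set.mem_singleton_iff]; tauto
    rwa [edgeSet_twoSwitch hA, hQ, symmDiff_right_comm]

theorem switchReducible_of_isAltCircuit_of_ne [Finite V] {m : ℕ} {c : ℕ → V}
    (hc : IsAltCircuit X Y m c) (hm : 1 < m)
    (hmin : ∀ m' c', 0 < m' → IsAltCircuit X Y m' c' → m ≤ m') (h03 : c 0 ≠ c 3) :
    SwitchReducible X Y := by
  refine switchReducible_of_path (by simpa [altGraph] using hc.2 0 (by omega))
    (by simpa [altGraph] using hc.2 1 (by omega)) (by simpa [altGraph] using hc.2 2 (by omega))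
    h03 fun h => ?_
  have := hmin _ _ (by omega) (hc.shortcut hm h)
  omega

/-- `c 0 = c 3` and `c 1 = c 4` cannot both hold, so after possibly rotating the circuit (which
exchanges `X` and `Y`) its first three edges form a path with distinct ends; minimality keeps the
closing chord out of `X \ Y`. -/
theorem switchReducible_of_isAltCircuit_minimal [Finite V] {m : ℕ} {c : ℕ → V}
    (hc : IsAltCircuit X Y m c) (hm : 0 < m)
    (hmin : ∀ m' c', 0 < m' → IsAltCircuit X Y m' c' ∨ IsAltCircuit Y X m' c' → m ≤ m') :
    SwitchReducible X Y := by
  have hm1 := hc.one_lt hm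
  by_cases h03 : c 0 = c 3
  · have h14 : c 1 ≠ c 4 := by
      intro h14
      have h₀ : (X \ Y).Adj (c 0) (c 1) := by simpa [altGraph] using hc.2 0 (by omega)
      have h₃ : (Y \ X).Adj (c 3) (c 4) := by
        simpa [altGraph, Nat.even_iff] using hc.2 3 (by omega)
      rw [← h03, ← h14] at h₃
      exact h₃.2 h₀.1
    refine (switchReducible_of_isAltCircuit_of_ne (hc.rotate hm) hm1
      (fun m' c' h h' => hmin m' c' h (.inr h')) ?_).symm
    simpa [show 3 < 2 * m by omega] using h14
  · exact switchReducible_of_isAltCircuit_of_ne hc hm1 (fun m' c' h h' => hmin m' c' h (.inl h'))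
      h03

theorem switchReducible_of_ne [Finite V]
    (hdeg : ∀ v, (X.neighborSet v).ncard = (Y.neighborSet v).ncard) (hne : X ≠ Y) :
    SwitchReducible X Y := by
  classical
  have hex : ∃ m, 0 < m ∧ ∃ c, IsAltCircuit X Y m c ∨ IsAltCircuit Y X m c := by
    obtain ⟨u, v, huv⟩ : ∃ u v, (X \ Y).Adj u v ∨ (Y \ X).Adj u v := by
      by_contra! h
      refine hne (SimpleGraph.ext (funext₂ fun u v => propext ?_))
      have := h u v
      simp only [sdiff_adj] at this
      tauto
    rcases huv with huv | huv
    · obtain ⟨m, hm, c, hc⟩ := exists_isAltCircuit hdeg huv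
      exact ⟨m, hm, c, .inl hc⟩
    · obtain ⟨m, hm, c, hc⟩ := exists_isAltCircuit (fun v => (hdeg v).symm) huv
      exact ⟨m, hm, c, .inr hc⟩
  obtain ⟨hm, c, hc⟩ := Nat.find_spec hex
  have hmin (m' : ℕ) (c' : ℕ → V) (hm' : 0 < m')
      (hc' : IsAltCircuit X Y m' c' ∨ IsAltCircuit Y X m' c') : Nat.find hex ≤ m' :=
    Nat.find_min' hex ⟨hm', c', hc'⟩
  rcases hc with hc | hc
  · exact switchReducible_of_isAltCircuit_minimal hc hm hmin
  · exact (switchReducible_of_isAltCircuit_minimal hc hm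
      fun m' c' h h' => hmin m' c' h h'.symm).symm

end Reduction

theorem reflTransGen_twoSwitchRel_of_ncard_neighborSet_eq [Finite V] {G H : SimpleGraph V}
    (hdeg : ∀ v, (G.neighborSet v).ncard = (H.neighborSet v).ncard) :
    ReflTransGen TwoSwitchRel G H := by
  induction hn : (G.edgeSet ∆ H.edgeSet).ncard using Nat.strong_induction_on generalizing G H
    with | _ n ih => ?_
  by_cases hGH : G = H
  · exact hGH ▸ .refl
  obtain ⟨G', H', hG, hH, hlt⟩ := switchReducible_of_ne hdeg hGH
  have hdeg' (v : V) : (G'.neighborSet v).ncard = (H'.neighborSet v).ncard := by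
    rw [ncard_neighborSet_eq_of_reflTransGen hG, ncard_neighborSet_eq_of_reflTransGen hH, hdeg]
  exact hG.trans ((ih _ (hn ▸ hlt) hdeg' rfl).trans (Std.Symm.symm _ _ hH))

end TwoSwitch

theorem stmt_16 {V : Type*} [Fintype V] (G H : SimpleGraph V) :
    (∀ v : V, (G.neighborSet v).ncard = (H.neighborSet v).ncard) ↔
      Relation.ReflTransGen
        (fun X Y : SimpleGraph V =>
          ∃ a b c d : V, A4 X a b c d ∧ Y = twoSwitch X a b c d) G H :=
  ⟨TwoSwitch.reflTransGen_twoSwitchRel_of_ncard_neighborSet_eq,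
    fun h v => (TwoSwitch.ncard_neighborSet_eq_of_reflTransGen h v).symm⟩
end

section
/- If a finite simple graph G contains no alternating 4-cycle (i.e., G is a threshold graph), then G is a unigraph: every graph with the same degree sequence as G is isomorphic to G. -/
open SimpleGraph

/-- The degree multiset (degree sequence) of a finite graph. -/
noncomputable def degMS {V : Type*} [Fintype V] (G : SimpleGraph V) : Multiset ℕ :=
  Finset.univ.val.map fun v => (G.neighborSet v).ncard

/-- A unigraph: every finite graph with the same degree sequence is isomorphic to it. -/
def IsUnigraph {V : Type} [Fintype V] (G : SimpleGraph V) : Prop :=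
  ∀ (W : Type) (_ : Fintype W) (H : SimpleGraph W), degMS G = degMS H → Nonempty (G ≃g H)


/-!
A graph without alternating 4-cycles has its neighbourhoods ordered by degree: if `deg x ≤ deg y`,
every neighbour of `x` other than `y` is a neighbour of `y`. Hence a vertex of maximum degree is
adjacent to every non-isolated vertex, so the graph has an isolated or a dominating vertex `v`.
Its degree `0` or `n - 1` occurs in the degree sequence of any `H` with the same degree sequence,
at a vertex `u` that is then isolated resp. dominating in `H` as well. Deleting `v` and `u` leaves
graphs with equal degree sequences, the first again free of alternating 4-cycles, so by induction
they are isomorphic, and the isomorphism extends by `v ↦ u`.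
-/

namespace SimpleGraph

variable {V W : Type*} {G : SimpleGraph V} {H : SimpleGraph W}

def A4Free (G : SimpleGraph V) : Prop :=
  ∀ a b c d, ¬ A4 G a b c d

theorem A4Free.induce (hG : G.A4Free) (s : Set V) : (G.induce s).A4Free := by
  rintro a b c d ⟨hab, hac, had, hbc, hbd, hcd, h⟩
  have hinj := Subtype.val_injective (p := (· ∈ s))
  exact hG a b c d ⟨hinj.ne hab, hinj.ne hac, hinj.ne had, hinj.ne hbc, hinj.ne hbd, hinj.ne hcd, h⟩

theorem A4Free.adj_of_adj_of_degree_le [DecidableEq V] [G.LocallyFinite] (hG : G.A4Free)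
    {x y b : V} (hxy : G.degree x ≤ G.degree y) (hxb : G.Adj x b) (hby : b ≠ y) :
    G.Adj y b := by
  by_contra hyb
  set A := (G.neighborFinset x).erase y
  set B := (G.neighborFinset y).erase x
  have hAB : A.card ≤ B.card := by
    simp only [A, B]
    by_cases hxy' : G.Adj x y
    · rw [Finset.card_erase_of_mem (by simpa), Finset.card_erase_of_mem (by simpa using hxy'.symm),
        card_neighborFinset_eq_degree, card_neighborFinset_eq_degree]
      omega
    · rw [Finset.erase_eq_of_notMem (s := G.neighborFinset x) (by simpa),
        Finset.erase_eq_of_notMem (s := G.neighborFinset y) (by simpa [adj_comm]),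
        card_neighborFinset_eq_degree, card_neighborFinset_eq_degree]
      exact hxy
  -- `b ∈ A \ B`, so `A ≠ B` and the cardinality bound forces `B ⊄ A`.
  obtain ⟨d, hdB, hdA⟩ : ∃ d ∈ B, d ∉ A := by
    by_contra! hBA
    have hbA : b ∈ A := by simpa [A, hby] using hxb
    have hbB : b ∈ B := Finset.eq_of_subset_of_card_le hBA hAB ▸ hbA
    exact hyb ((G.mem_neighborFinset _ _).mp (Finset.mem_erase.mp hbB).2)
  simp only [A, B, Finset.mem_erase, mem_neighborFinset] at hdA hdB
  have hxd : ¬ G.Adj x d := fun h => hdA ⟨hdB.2.ne', h⟩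
  exact hG x b y d ⟨hxb.ne, by rintro rfl; exact hyb hxb, hdB.1.symm, hby,
    by rintro rfl; exact hyb hdB.2, hdB.2.ne, hxb, hdB.2, fun h => hyb h.symm, hxd⟩

theorem A4Free.exists_isolated_or_dominating [Fintype V] [DecidableEq V] [DecidableRel G.Adj]
    [Nonempty V] (hG : G.A4Free) :
    (∃ v, ∀ w, ¬ G.Adj v w) ∨ ∃ v, ∀ w, w ≠ v → G.Adj v w := by
  obtain ⟨v, -, hv⟩ :=
    Finset.exists_max_image Finset.univ (fun v => G.degree v) Finset.univ_nonempty
  by_cases hdom : ∀ w, w ≠ v → G.Adj v w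
  · exact .inr ⟨v, hdom⟩
  push Not at hdom
  obtain ⟨w, hwv, hvw⟩ := hdom
  exact .inl ⟨w, fun x hwx =>
    hvw (hG.adj_of_adj_of_degree_le (hv x (Finset.mem_univ x)) hwx.symm hwv)⟩

theorem ncard_neighborSet_induce_compl (G : SimpleGraph V) (v : V) (x : ({v}ᶜ : Set V)) :
    ((G.induce {v}ᶜ).neighborSet x).ncard = (G.neighborSet x \ {v}).ncard := by
  rw [neighborSet_induce, ← Set.ncard_preimage_of_injective_subset_range Subtype.val_injective
    (s := G.neighborSet x \ {v}) fun y hy => ⟨⟨y, hy.2⟩, rfl⟩]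
  congr 1
  ext y
  exact (and_iff_left y.2).symm

theorem card_degMS [Fintype V] (G : SimpleGraph V) :
    Multiset.card (degMS G) = Fintype.card V := by
  simp [degMS, Finset.card_univ]

section DeleteVertex

variable [Fintype V] [DecidableEq V] [Fintype W] [DecidableEq W]

theorem degMS_eq_cons (G : SimpleGraph V) (v : V) :
    degMS G = (G.neighborSet v).ncard ::ₘ
      (Finset.univ : Finset ({v}ᶜ : Set V)).val.map
        fun x : ({v}ᶜ : Set V) => (G.neighborSet x).ncard := by
  have : (Finset.univ : Finset V).filter (· ∈ ({v}ᶜ : Set V)) = Finset.univ.erase v := by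
    ext; simp
  rw [degMS, ← Finset.insert_erase (Finset.mem_univ v), Finset.insert_val_of_notMem (by simp),
    Multiset.map_cons, ← this, ← Finset.univ_val_map_subtype_restrict]
  rfl

theorem degMS_eq_zero_cons {v : V} (hv : ∀ w, ¬ G.Adj v w) :
    degMS G = 0 ::ₘ degMS (G.induce {v}ᶜ) := by
  rw [degMS_eq_cons G v, degMS]
  congr 1
  · rw [show G.neighborSet v = ∅ from Set.eq_empty_of_forall_notMem hv, Set.ncard_empty]
  · refine Multiset.map_congr rfl fun x _ => ?_
    rw [ncard_neighborSet_induce_compl, Set.sdiff_singleton_eq_self fun h => hv x h.symm]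

theorem degMS_eq_cons_map_succ {v : V} (hv : ∀ w, w ≠ v → G.Adj v w) :
    degMS G = (Fintype.card V - 1) ::ₘ (degMS (G.induce {v}ᶜ)).map (· + 1) := by
  have hN : G.neighborSet v = {v}ᶜ := Set.ext fun w => ⟨Adj.ne', hv w⟩
  rw [degMS_eq_cons G v, degMS, Multiset.map_map, hN, Set.ncard_compl, Set.ncard_singleton,
    Nat.card_eq_fintype_card]
  congr 1
  refine Multiset.map_congr rfl fun x _ => ?_
  rw [Function.comp_apply, ncard_neighborSet_induce_compl,
    Set.ncard_sdiff_singleton_add_one (s := G.neighborSet x) (hv x x.2).symm]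

theorem exists_isolated_and_degMS_induce_eq {v : V} (hv : ∀ w, ¬ G.Adj v w)
    (hdeg : degMS G = degMS H) :
    ∃ u, (∀ w, ¬ H.Adj u w) ∧ degMS (G.induce {v}ᶜ) = degMS (H.induce {u}ᶜ) := by
  have hmem : 0 ∈ degMS H := hdeg ▸ degMS_eq_zero_cons hv ▸ Multiset.mem_cons_self 0 _
  obtain ⟨u, -, hu⟩ := Multiset.mem_map.mp hmem
  have hu : ∀ w, ¬ H.Adj u w := Set.eq_empty_iff_forall_notMem.mp ((Set.ncard_eq_zero (s := H.neighborSet u)).mp hu)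
  refine ⟨u, hu, (Multiset.cons_inj_right 0).mp ?_⟩
  rw [← degMS_eq_zero_cons hv, ← degMS_eq_zero_cons hu, hdeg]

theorem exists_dominating_and_degMS_induce_eq {v : V} (hv : ∀ w, w ≠ v → G.Adj v w)
    (hdeg : degMS G = degMS H) :
    ∃ u, (∀ w, w ≠ u → H.Adj u w) ∧ degMS (G.induce {v}ᶜ) = degMS (H.induce {u}ᶜ) := by
  have hcard : Fintype.card W = Fintype.card V := by rw [← card_degMS, ← card_degMS, hdeg]
  have hmem : Fintype.card V - 1 ∈ degMS H :=
    hdeg ▸ degMS_eq_cons_map_succ hv ▸ Multiset.mem_cons_self _ _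
  obtain ⟨u, -, hu⟩ := Multiset.mem_map.mp hmem
  have hN : H.neighborSet u = {u}ᶜ := by
    refine Set.eq_of_subset_of_ncard_le (fun w hw => Adj.ne' hw) ?_
    rw [hu, Set.ncard_compl, Set.ncard_singleton, Nat.card_eq_fintype_card, hcard]
  have hu : ∀ w, w ≠ u → H.Adj u w := fun w hw => by rwa [← mem_neighborSet, hN]
  refine ⟨u, hu, Multiset.map_injective (add_left_injective 1) ?_⟩
  rw [← Multiset.cons_inj_right (Fintype.card V - 1), ← degMS_eq_cons_map_succ hv, hcard.symm,
    ← degMS_eq_cons_map_succ hu, hdeg]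

end DeleteVertex

theorem nonempty_iso_of_induce_compl {v : V} {u : W} (φ : G.induce {v}ᶜ ≃g H.induce {u}ᶜ)
    (hφ : ∀ x : ({v}ᶜ : Set V), G.Adj v x ↔ H.Adj u (φ x)) : Nonempty (G ≃g H) := by
  classical
  let ψ : {x // x ≠ v} ≃ {y // y ≠ u} := φ.toEquiv
  let e : V ≃ W := ((Equiv.optionSubtypeNe v).symm.trans ψ.optionCongr).trans
    (Equiv.optionSubtypeNe u)
  have he_v : e v = u := by
    simp only [e, Equiv.trans_apply, Equiv.optionSubtypeNe_symm_self]; rfl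
  have he_ne (x : V) (hx : x ≠ v) : e x = φ ⟨x, hx⟩ := by
    simp only [e, Equiv.trans_apply, Equiv.optionSubtypeNe_symm_of_ne hx]; rfl
  refine ⟨⟨e, fun {a b} => ?_⟩⟩
  by_cases ha : a = v <;> by_cases hb : b = v
  · simp [ha, hb]
  · subst ha; rw [he_v, he_ne b hb]; exact (hφ ⟨b, hb⟩).symm
  · subst hb; rw [he_ne a ha, he_v, H.adj_comm, G.adj_comm]; exact (hφ ⟨a, ha⟩).symm
  · rw [he_ne a ha, he_ne b hb]; exact φ.map_adj_iff

theorem A4Free.nonempty_iso_of_degMS_eq [Fintype V] [Fintype W] (hG : G.A4Free)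
    (hdeg : degMS G = degMS H) : Nonempty (G ≃g H) := by
  induction hn : Fintype.card V generalizing V W with
  | zero =>
    have : IsEmpty V := Fintype.card_eq_zero_iff.mp hn
    have : IsEmpty W := Fintype.card_eq_zero_iff.mp (by rw [← card_degMS, ← hdeg, card_degMS, hn])
    exact ⟨⟨Equiv.equivOfIsEmpty V W, fun {a} => isEmptyElim a⟩⟩
  | succ n ih =>
    classical
    have : Nonempty V := Fintype.card_pos_iff.mp (hn ▸ n.succ_pos)
    have hcard (v : V) : Fintype.card ({v}ᶜ : Set V) = n := by
      rw [Fintype.card_compl_set, Set.card_singleton, hn, Nat.add_sub_cancel]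
    rcases hG.exists_isolated_or_dominating with ⟨v, hv⟩ | ⟨v, hv⟩
    · obtain ⟨u, hu, hdeg'⟩ := exists_isolated_and_degMS_induce_eq hv hdeg
      obtain ⟨φ⟩ := ih (hG.induce _) hdeg' (hcard v)
      exact nonempty_iso_of_induce_compl φ fun x => iff_of_false (hv x) (hu _)
    · obtain ⟨u, hu, hdeg'⟩ := exists_dominating_and_degMS_induce_eq hv hdeg
      obtain ⟨φ⟩ := ih (hG.induce _) hdeg' (hcard v)
      exact nonempty_iso_of_induce_compl φ fun x => iff_of_true (hv x x.2) (hu _ (φ x).2)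

end SimpleGraph

theorem stmt_17 {V : Type} [Fintype V] (G : SimpleGraph V)
    (h : ∀ a b c d : V, ¬ A4 G a b c d) : IsUnigraph G :=
  fun _ _ _ hdeg => A4Free.nonempty_iso_of_degMS_eq h hdeg
end

section
/- Let G be a finite simple graph, let ⟨p,q:r,s⟩ be an alternating 4-cycle in G, and let H be the graph obtained by the 2-switch on ⟨p,q:r,s⟩. If H ≅ G, deg_G(p) > deg_G(r), and deg_G(q) > deg_G(s), then at least one of L_G(p) = L_H(p), L_G(q) = L_H(q), L_G(r) = L_H(r), L_G(s) = L_H(s) holds, where L denotes the neighborhood list. -/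
open SimpleGraph

section Aux
variable {V : Type*}

lemma twoSwitch_adj (G : SimpleGraph V) (a b c d x y : V) :
    (twoSwitch G a b c d).Adj x y ↔
      ((G.Adj x y ∧ s(x,y) ≠ s(a,b) ∧ s(x,y) ≠ s(c,d)) ∨ s(x,y) = s(b,c) ∨ s(x,y) = s(a,d))
        ∧ x ≠ y := by
  simp only [twoSwitch, fromEdgeSet_adj, Set.mem_union, Set.mem_diff, Set.mem_insert_iff,
    Set.mem_singleton_iff, mem_edgeSet]
  tauto

lemma twoSwitch_swap1 (G : SimpleGraph V) (a b c d : V) :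
    twoSwitch G a b c d = twoSwitch G b a d c := by
  rw [twoSwitch, twoSwitch, show s(b,a) = s(a,b) from Sym2.eq_swap,
    show s(d,c) = s(c,d) from Sym2.eq_swap, Set.pair_comm (s(b,c)) (s(a,d))]

lemma twoSwitch_swap2 (G : SimpleGraph V) (a b c d : V) :
    twoSwitch G a b c d = twoSwitch G d c b a := by
  rw [twoSwitch, twoSwitch, show s(d,c) = s(c,d) from Sym2.eq_swap,
    show s(b,a) = s(a,b) from Sym2.eq_swap, show s(c,b) = s(b,c) from Sym2.eq_swap,
    show s(d,a) = s(a,d) from Sym2.eq_swap, Set.pair_comm (s(a,b)) (s(c,d))]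

lemma A4.swap1 {G : SimpleGraph V} {a b c d : V} (h : A4 G a b c d) : A4 G b a d c := by
  obtain ⟨h1, h2, h3, h4, h5, h6, e1, e2, n1, n2⟩ := h
  exact ⟨h1.symm, h5, h4, h3, h2, h6.symm, e1.symm, e2.symm, n2, n1⟩

lemma A4.swap2 {G : SimpleGraph V} {a b c d : V} (h : A4 G a b c d) : A4 G d c b a := by
  obtain ⟨h1, h2, h3, h4, h5, h6, e1, e2, n1, n2⟩ := h
  exact ⟨h6.symm, h5.symm, h3.symm, h4.symm, h2.symm, h1.symm, e2.symm, e1.symm,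
    fun hh => n1 hh.symm, fun hh => n2 hh.symm⟩

lemma adj_first {G : SimpleGraph V} {a b c d : V} (h : A4 G a b c d) (y : V) :
    (twoSwitch G a b c d).Adj a y ↔ (G.Adj a y ∧ y ≠ b) ∨ y = d := by
  obtain ⟨hab, hac, had, hbc, hbd, hcd, e1, e2, n1, n2⟩ := h
  rw [twoSwitch_adj]
  simp only [Sym2.eq_iff, ne_eq, not_or, true_and, and_true]
  constructor
  · rintro ⟨h', hne⟩
    rcases h' with ⟨ha, h1, _⟩ | (⟨h3, h4⟩ | ⟨h3, h4⟩) | (h4 | ⟨h3, h4⟩)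
    · exact Or.inl ⟨ha, h1.1⟩
    · exact absurd h3 hab
    · exact absurd h3 hac
    · exact Or.inr h4
    · exact absurd h3 had
  · rintro (⟨ha, hyb⟩ | rfl)
    · exact ⟨Or.inl ⟨ha, ⟨hyb, fun hh => hab hh.1⟩,
        ⟨fun hh => hac hh.1, fun hh => had hh.1⟩⟩, ha.ne⟩
    · exact ⟨Or.inr (Or.inr (Or.inl rfl)), had⟩

lemma adj_outside {G : SimpleGraph V} (a b c d x : V)
    (ha : x ≠ a) (hb : x ≠ b) (hc : x ≠ c) (hd : x ≠ d) (y : V) :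
    (twoSwitch G a b c d).Adj x y ↔ G.Adj x y := by
  rw [twoSwitch_adj]
  simp only [Sym2.eq_iff, ne_eq, not_or]
  constructor
  · rintro ⟨h', hne⟩
    rcases h' with ⟨ha', -⟩ | (⟨h3, -⟩ | ⟨h3, -⟩) | (⟨h3, -⟩ | ⟨h3, -⟩)
    · exact ha'
    · exact absurd h3 hb
    · exact absurd h3 hc
    · exact absurd h3 ha
    · exact absurd h3 hd
  · intro hG
    exact ⟨Or.inl ⟨hG, ⟨fun hh => ha hh.1, fun hh => hb hh.1⟩,
      ⟨fun hh => hc hh.1, fun hh => hd hh.1⟩⟩, hG.ne⟩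

lemma nbrSet_first {G : SimpleGraph V} {a b c d : V} (h : A4 G a b c d) :
    (twoSwitch G a b c d).neighborSet a = insert d (G.neighborSet a \ {b}) := by
  ext y
  simp only [mem_neighborSet, adj_first h, Set.mem_insert_iff, Set.mem_diff,
    Set.mem_singleton_iff]
  tauto

lemma deg_first {G : SimpleGraph V} {a b c d : V} [Fintype V] (h : A4 G a b c d) :
    ((twoSwitch G a b c d).neighborSet a).ncard = (G.neighborSet a).ncard := by
  have hd : d ∉ G.neighborSet a \ {b} := fun hh => h.2.2.2.2.2.2.2.2.2 hh.1
  have hb : b ∈ G.neighborSet a := h.2.2.2.2.2.2.1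
  rw [nbrSet_first h, Set.ncard_insert_of_notMem hd (Set.toFinite _)]
  exact Set.ncard_diff_singleton_add_one hb (Set.toFinite _)

lemma deg_pres {G : SimpleGraph V} {a b c d : V} [Fintype V] (h : A4 G a b c d) (v : V) :
    ((twoSwitch G a b c d).neighborSet v).ncard = (G.neighborSet v).ncard := by
  by_cases hva : v = a
  · subst hva; exact deg_first h
  by_cases hvb : v = b
  · subst hvb; rw [twoSwitch_swap1]; exact deg_first h.swap1
  by_cases hvd : v = d
  · subst hvd; rw [twoSwitch_swap2]; exact deg_first h.swap2
  by_cases hvc : v = c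
  · subst hvc; rw [twoSwitch_swap2, twoSwitch_swap1]; exact deg_first h.swap2.swap1
  · congr 1
    ext y
    exact adj_outside a b c d v hva hvb hvc hvd y

end Aux

open scoped Classical in
/-- The neighborhood list of `v`: the multiset of degrees of the neighbors of `v`. -/
noncomputable def nbrList {V : Type*} [Fintype V] (G : SimpleGraph V) (v : V) : Multiset ℕ :=
  (G.neighborFinset v).val.map fun w => (G.neighborSet w).ncard

section Aux2
open scoped Classical
variable {V : Type*} [Fintype V]

lemma nbrList_card (G : SimpleGraph V) (v : V) :
    (nbrList G v).card = (G.neighborSet v).ncard := by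
  rw [nbrList, Multiset.card_map]
  rw [show (G.neighborFinset v).val.card = (G.neighborFinset v).card from rfl]
  rw [neighborFinset_def, Set.ncard_eq_toFinset_card']

lemma nbrList_first {G : SimpleGraph V} {a b c d : V} (h : A4 G a b c d) :
    ∃ m : Multiset ℕ,
      nbrList G a = (G.neighborSet b).ncard ::ₘ m ∧
      nbrList (twoSwitch G a b c d) a = (G.neighborSet d).ncard ::ₘ m := by
  set H := twoSwitch G a b c d with hH
  have hfin : H.neighborFinset a = insert d ((G.neighborFinset a).erase b) := by
    ext y
    simp only [mem_neighborFinset, Finset.mem_insert, Finset.mem_erase]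
    rw [hH, adj_first h]
    tauto
  have hbmem : b ∈ (G.neighborFinset a).val := by
    rw [← Finset.mem_def, mem_neighborFinset]; exact h.2.2.2.2.2.2.1
  have hdnot : d ∉ (G.neighborFinset a).erase b := by
    simp only [Finset.mem_erase, mem_neighborFinset]
    exact fun hh => h.2.2.2.2.2.2.2.2.2 hh.2
  refine ⟨((G.neighborFinset a).erase b).val.map (fun w => (G.neighborSet w).ncard), ?_, ?_⟩
  · rw [nbrList]
    have hv : (G.neighborFinset a).val = b ::ₘ ((G.neighborFinset a).erase b).val := by
      rw [Finset.erase_val]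
      exact (Multiset.cons_erase hbmem).symm
    rw [hv, Multiset.map_cons]
  · rw [nbrList, hfin, Finset.insert_val_of_notMem hdnot, Multiset.map_cons]
    have hmap : ∀ w, (H.neighborSet w).ncard = (G.neighborSet w).ncard := deg_pres h
    rw [hmap d]
    congr 1
    exact Multiset.map_congr rfl (fun x _ => hmap x)

lemma nbrList_outside {G : SimpleGraph V} {a b c d : V} (h : A4 G a b c d) (x : V)
    (ha : x ≠ a) (hb : x ≠ b) (hc : x ≠ c) (hd : x ≠ d) :
    nbrList (twoSwitch G a b c d) x = nbrList G x := by
  have hfin : (twoSwitch G a b c d).neighborFinset x = G.neighborFinset x := by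
    ext y
    simp only [mem_neighborFinset]
    exact adj_outside a b c d x ha hb hc hd y
  rw [nbrList, nbrList, hfin]
  exact Multiset.map_congr rfl (fun w _ => deg_pres h w)

lemma nbrList_iso {G H : SimpleGraph V} (e : H ≃g G) (v : V) :
    nbrList H v = nbrList G (e v) := by
  have hdeg : ∀ w, (G.neighborSet (e w)).ncard = (H.neighborSet w).ncard := by
    intro w
    have him : G.neighborSet (e w) = (e : V → V) '' H.neighborSet w := by
      ext u
      simp only [mem_neighborSet, Set.mem_image]
      constructor
      · intro hu
        refine ⟨e.symm u, ?_, by simp⟩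
        have : G.Adj (e w) (e (e.symm u)) := by simpa using hu
        exact e.map_adj_iff.mp this
      · rintro ⟨u', hu', rfl⟩
        exact e.map_adj_iff.mpr hu'
    rw [him, Set.ncard_image_of_injective _ e.injective]
  have him : G.neighborFinset (e v) = (H.neighborFinset v).image e := by
    ext w
    simp only [mem_neighborFinset, Finset.mem_image]
    constructor
    · intro hw
      refine ⟨e.symm w, ?_, by simp⟩
      have : G.Adj (e v) (e (e.symm w)) := by simpa using hw
      exact e.map_adj_iff.mp this
    · rintro ⟨u, hu, rfl⟩
      exact e.map_adj_iff.mpr hu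
  rw [nbrList, nbrList, him, Finset.image_val_of_injOn (e.injective.injOn),
    Multiset.map_map]
  refine (Multiset.map_congr rfl (fun w _ => ?_)).symm
  exact hdeg w

end Aux2

open scoped Classical in
theorem stmt_19 {V : Type*} [Fintype V] (G : SimpleGraph V) (p q r s : V)
    (h : A4 G p q r s)
    (hiso : Nonempty (twoSwitch G p q r s ≃g G))
    (hpr : (G.neighborSet p).ncard > (G.neighborSet r).ncard)
    (hqs : (G.neighborSet q).ncard > (G.neighborSet s).ncard) :
    nbrList G p = nbrList (twoSwitch G p q r s) p ∨
    nbrList G q = nbrList (twoSwitch G p q r s) q ∨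
    nbrList G r = nbrList (twoSwitch G p q r s) r ∨
    nbrList G s = nbrList (twoSwitch G p q r s) s := by
  by_contra hcon
  push_neg at hcon
  obtain ⟨c1, c2, c3, c4⟩ := hcon
  obtain ⟨e⟩ := hiso
  obtain ⟨hpq, hpr', hps, hqr, hqs', hrs, -, -, -, -⟩ := id h
  -- cardinalities of neighborhood lists
  have cardG : ∀ v, (nbrList G v).card = (G.neighborSet v).ncard := fun v => nbrList_card G v
  have cardH : ∀ v, (nbrList (twoSwitch G p q r s) v).card = (G.neighborSet v).ncard := by
    intro v
    rw [nbrList_card (twoSwitch G p q r s) v]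
    exact deg_pres h v
  have hdeq : ∀ x y : V, nbrList G x = nbrList (twoSwitch G p q r s) y →
      (G.neighborSet x).ncard = (G.neighborSet y).ncard := by
    intro x y hxy
    rw [← cardG x, ← cardH y, hxy]
  -- global multiset equality
  have hglob : Finset.univ.val.map (nbrList (twoSwitch G p q r s))
      = Finset.univ.val.map (nbrList G) := by
    have h1 : Finset.univ.val.map (nbrList (twoSwitch G p q r s))
        = Finset.univ.val.map (nbrList G ∘ (e : V → V)) :=
      Multiset.map_congr rfl (fun v _ => nbrList_iso e v)
    have h2 : Finset.univ.val.map (⇑e) = Finset.univ.val := by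
      have h3 := congrArg Finset.val (Finset.map_univ_equiv e.toEquiv)
      simp only [Finset.map_val] at h3
      convert h3 using 2
      rfl
    rw [h1, ← Multiset.map_map, h2]
  -- decompose univ
  have hndup : (Finset.univ.val : Multiset V).Nodup := Finset.univ.nodup
  have hmp : p ∈ (Finset.univ.val : Multiset V) := Finset.mem_univ p
  have hmq : q ∈ (Finset.univ.val : Multiset V).erase p :=
    (Multiset.mem_erase_of_ne hpq.symm).mpr (Finset.mem_univ q)
  have hmr : r ∈ ((Finset.univ.val : Multiset V).erase p).erase q := by
    rw [Multiset.mem_erase_of_ne hqr.symm, Multiset.mem_erase_of_ne hpr'.symm]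
    exact Finset.mem_univ r
  have hms : s ∈ (((Finset.univ.val : Multiset V).erase p).erase q).erase r := by
    rw [Multiset.mem_erase_of_ne hrs.symm, Multiset.mem_erase_of_ne hqs'.symm,
      Multiset.mem_erase_of_ne hps.symm]
    exact Finset.mem_univ s
  have hdecomp : (Finset.univ.val : Multiset V)
      = p ::ₘ q ::ₘ r ::ₘ s ::ₘ ((((Finset.univ.val : Multiset V).erase p).erase q).erase
          r).erase s := by
    rw [Multiset.cons_erase hms, Multiset.cons_erase hmr, Multiset.cons_erase hmq,
      Multiset.cons_erase hmp]
  have ht_out : ∀ x ∈ ((((Finset.univ.val : Multiset V).erase p).erase q).erase r).erase s,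
      nbrList (twoSwitch G p q r s) x = nbrList G x := by
    intro x hx
    have n1 : (((Finset.univ.val : Multiset V).erase p)).Nodup := hndup.erase _
    have n2 := n1.erase q
    have n3 := n2.erase r
    rw [n3.mem_erase_iff] at hx
    obtain ⟨hxs, hx⟩ := hx
    rw [n2.mem_erase_iff] at hx
    obtain ⟨hxr, hx⟩ := hx
    rw [n1.mem_erase_iff] at hx
    obtain ⟨hxq, hx⟩ := hx
    rw [hndup.mem_erase_iff] at hx
    exact nbrList_outside h x hx.1 hxq hxr hxs
  -- four-element multiset equality
  have key4 : ({nbrList (twoSwitch G p q r s) p, nbrList (twoSwitch G p q r s) q,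
      nbrList (twoSwitch G p q r s) r, nbrList (twoSwitch G p q r s) s} : Multiset (Multiset ℕ))
      = {nbrList G p, nbrList G q, nbrList G r, nbrList G s} := by
    have h1 := hglob
    rw [hdecomp] at h1
    simp only [Multiset.map_cons] at h1
    rw [Multiset.map_congr rfl ht_out] at h1
    have e4 : ∀ (A B C D' : Multiset ℕ) (M : Multiset (Multiset ℕ)),
        (A ::ₘ B ::ₘ C ::ₘ D' ::ₘ M) = ({A, B, C, D'} : Multiset (Multiset ℕ)) + M := by
      intros A B C D' M
      simp [Multiset.insert_eq_cons]
    rw [e4, e4] at h1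
    exact add_right_cancel h1
  -- membership of nbrList G p
  have hm1 : nbrList G p ∈ ({nbrList (twoSwitch G p q r s) p, nbrList (twoSwitch G p q r s) q,
      nbrList (twoSwitch G p q r s) r, nbrList (twoSwitch G p q r s) s} :
      Multiset (Multiset ℕ)) := by
    rw [key4]
    simp
  simp only [Multiset.insert_eq_cons, Multiset.mem_cons, Multiset.mem_singleton] at hm1
  -- the exchange structure at p and q
  obtain ⟨m1, hGp, hHp⟩ := nbrList_first h
  have hsw : twoSwitch G p q r s = twoSwitch G q p s r := twoSwitch_swap1 G p q r s
  obtain ⟨m2, hGq, hHq⟩ := nbrList_first (A4.swap1 h)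
  rw [← hsw] at hHq
  rcases hm1 with hA | hA | hA | hA
  · exact c1 hA
  · -- Case A : L_G p = L_H q, so deg p = deg q
    have hdpq : (G.neighborSet p).ncard = (G.neighborSet q).ncard := hdeq p q hA
    have hm2 : nbrList G q ∈ ({nbrList (twoSwitch G p q r s) p,
        nbrList (twoSwitch G p q r s) q, nbrList (twoSwitch G p q r s) r,
        nbrList (twoSwitch G p q r s) s} : Multiset (Multiset ℕ)) := by
      rw [key4]
      simp
    simp only [Multiset.insert_eq_cons, Multiset.mem_cons, Multiset.mem_singleton] at hm2
    rcases hm2 with hB | hB | hB | hB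
    · -- count contradiction
      have eqA : ((G.neighborSet q).ncard ::ₘ m1 : Multiset ℕ)
          = (G.neighborSet r).ncard ::ₘ m2 := by
        rw [← hGp, ← hHq]
        exact hA
      have eqB : ((G.neighborSet p).ncard ::ₘ m2 : Multiset ℕ)
          = (G.neighborSet s).ncard ::ₘ m1 := by
        rw [← hGq, ← hHp]
        exact hB
      have hne1 : ¬ ((G.neighborSet q).ncard = (G.neighborSet r).ncard) := by omega
      have hne2 : ¬ ((G.neighborSet q).ncard = (G.neighborSet s).ncard) := by omega
      have cA := congrArg (Multiset.count ((G.neighborSet q).ncard)) eqA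
      have cB := congrArg (Multiset.count ((G.neighborSet q).ncard)) eqB
      rw [Multiset.count_cons_self, Multiset.count_cons_of_ne hne1] at cA
      rw [Multiset.count_cons, Multiset.count_cons, if_pos hdpq.symm, if_neg hne2] at cB
      omega
    · exact c2 hB
    · have := hdeq q r hB; omega
    · have := hdeq q s hB; omega
  · -- L_G p = L_H r : deg p = deg r, contradiction
    have := hdeq p r hA; omega
  · -- Case B : L_G p = L_H s, so deg p = deg s
    have hdps : (G.neighborSet p).ncard = (G.neighborSet s).ncard := hdeq p s hA
    have hm2 : nbrList G q ∈ ({nbrList (twoSwitch G p q r s) p,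
        nbrList (twoSwitch G p q r s) q, nbrList (twoSwitch G p q r s) r,
        nbrList (twoSwitch G p q r s) s} : Multiset (Multiset ℕ)) := by
      rw [key4]
      simp
    simp only [Multiset.insert_eq_cons, Multiset.mem_cons, Multiset.mem_singleton] at hm2
    rcases hm2 with hB | hB | hB | hB
    · have := hdeq q p hB; omega
    · exact c2 hB
    · have := hdeq q r hB; omega
    · have := hdeq q s hB; omega
end
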